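/- Let A and B be nonempty finite sets, g : A → B a bijection, and u : A → ℝ, v : B → ℝ such that for all s, s' ∈ A, u(s) ≤ u(s') if and only if v(g(s)) ≤ v(g(s')). Then there exists a surjective strictly increasing function α : ℝ → ℝ with α ∘ u = v ∘ g. -/

import Mathlib

/-!
Adjoin the points of `u`'s range in increasing order. Once an order automorphism `e` of `ℝ` has
the prescribed values on the points below a new point `a`, compose it with an automorphism that
fixes everything up to some `c` lying above those values but below `e a` and the target value at
`a`, and that stretches `[c, ∞)` linearly so as to send `e a` to that target.
-/

open Set

lemma Finset.exists_lt_forall_le {α : Type*} [LinearOrder α] [NoMinOrder α] {s : Finset α}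
    {m : α} (h : ∀ x ∈ s, x < m) : ∃ c < m, ∀ x ∈ s, x ≤ c := by
  rcases s.eq_empty_or_nonempty with rfl | hs
  · obtain ⟨c, hc⟩ := exists_lt m
    exact ⟨c, hc, by simp⟩
  · exact ⟨s.max' hs, (s.max'_lt_iff hs).2 h, fun x hx => s.le_max' x hx⟩

section LinearOrderedField

variable {K : Type*} [Field K] [LinearOrder K] [IsStrictOrderedRing K]

theorem exists_orderIso_eqOn_Iic_apply_eq {c p q : K} (hp : c < p) (hq : c < q) :
    ∃ φ : K ≃o K, EqOn φ id (Iic c) ∧ φ p = q := by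
  set k := (q - c) / (p - c)
  have hk : 0 < k := div_pos (sub_pos.2 hq) (sub_pos.2 hp)
  let φ : K → K := fun x => min x c + k * max (x - c) 0
  have hlo : ∀ x ≤ c, φ x = x := fun x hx => by
    simp [φ, min_eq_left hx, max_eq_right (sub_nonpos.2 hx)]
  have hhi : ∀ x, c ≤ x → φ x = c + k * (x - c) := fun x hx => by
    simp [φ, min_eq_right hx, max_eq_left (sub_nonneg.2 hx)]
  have hmono : StrictMono φ := StrictMonoOn.Iic_union_Ici (a := c)
    (fun x hx y hy hxy => by rwa [hlo x hx, hlo y hy])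
    (fun x hx y hy hxy => by rw [hhi x hx, hhi y hy]; gcongr)
  have hsurj : Function.Surjective φ := by
    intro y
    rcases le_total y c with hy | hy
    · exact ⟨y, hlo y hy⟩
    · refine ⟨c + (y - c) / k, ?_⟩
      rw [hhi _ (le_add_of_nonneg_right (div_nonneg (sub_nonneg.2 hy) hk.le))]
      field_simp
      ring
  refine ⟨hmono.orderIsoOfSurjective φ hsurj, fun x hx => hlo x hx, ?_⟩
  change φ p = q
  rw [hhi p hp.le, div_mul_cancel₀ _ (sub_pos.2 hp).ne']
  ring

theorem StrictMonoOn.exists_orderIso_eqOn {s : Finset K} {f : K → K}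
    (hf : StrictMonoOn f s) : ∃ e : K ≃o K, EqOn e f s := by
  classical
  induction s using Finset.induction_on_max with
  | empty => exact ⟨OrderIso.refl K, by simp⟩
  | insert a s hlt ih =>
    obtain ⟨e, he⟩ := ih (hf.mono (by simp))
    have hbelow : ∀ y ∈ s.image f, y < min (e a) (f a) := by
      simp only [Finset.mem_image, lt_min_iff, forall_exists_index, and_imp]
      rintro _ x hx rfl
      have hxa := hlt x hx
      exact ⟨he hx ▸ e.strictMono hxa, hf (by simp [hx]) (by simp) hxa⟩
    obtain ⟨c, hc, hfc⟩ := Finset.exists_lt_forall_le hbelow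
    obtain ⟨φ, hφ, hφa⟩ := exists_orderIso_eqOn_Iic_apply_eq (lt_min_iff.1 hc).1
      (lt_min_iff.1 hc).2
    refine ⟨e.trans φ, fun x hx => ?_⟩
    rcases Finset.mem_insert.1 hx with rfl | hx
    · exact hφa
    · simp only [OrderIso.trans_apply, he hx]
      exact hφ (hfc _ (Finset.mem_image_of_mem f hx))

end LinearOrderedField

theorem strictMono_of_ordinal_iso_general (A B : Type*) [Fintype A]
    (g : A ≃ B) (u : A → ℝ) (v : B → ℝ)
    (hord : ∀ s s' : A, u s ≤ u s' ↔ v (g s) ≤ v (g s')) :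
    ∃ α : ℝ → ℝ, Function.Surjective α ∧ StrictMono α ∧
      ∀ s, α (u s) = v (g s) := by
  classical
  have hfactor : (v ∘ g).FactorsThrough u := fun s s' h =>
    le_antisymm ((hord s s').1 h.le) ((hord s' s).1 h.ge)
  set f := Function.extend u (v ∘ g) id
  have hfu : ∀ s, f (u s) = v (g s) := hfactor.extend_apply id
  have hf : StrictMonoOn f (Finset.univ.image u) := by
    simp only [Finset.coe_image, Finset.coe_univ, Set.image_univ]
    rintro _ ⟨s, rfl⟩ _ ⟨s', rfl⟩ h
    rw [hfu, hfu]
    exact lt_of_not_ge (mt (hord s' s).2 (not_le.2 h))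
  obtain ⟨e, he⟩ := hf.exists_orderIso_eqOn
  exact ⟨e, e.surjective, e.strictMono, fun s => (he (by simp)).trans (hfu s)⟩

/-- If a bijection `g : A ≃ B` between nonempty finite sets preserves the
preference order induced by the utilities `u` and `v`, then there exists a
surjective strictly increasing `α : ℝ → ℝ` with `α ∘ u = v ∘ g`. -/
theorem strictMono_of_ordinal_iso (A B : Type*) [Fintype A] [Fintype B]
    [Nonempty A] [Nonempty B] (g : A ≃ B) (u : A → ℝ) (v : B → ℝ)
    (hord : ∀ s s' : A, u s ≤ u s' ↔ v (g s) ≤ v (g s')) :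
    ∃ α : ℝ → ℝ, Function.Surjective α ∧ StrictMono α ∧
      ∀ s, α (u s) = v (g s) :=
  strictMono_of_ordinal_iso_general A B g u v hord
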